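/- Let J be the Choi matrix of a quantum channel from a finite-dimensional system A to a finite-dimensional system B, let M ≥ 1 and g ≥ 1 be real numbers, and let ρ, ρ' be quantum states on R ≅ A with ρ ≼ g·ρ'. Then suc^NS(J, M, ρ) ≤ g · suc^NS(J, g·M, ρ'). -/

import Mathlib

/-! If `Λ` is feasible for the program of `suc^NS(J, M, ρ)`, then `Λ / g` is feasible for that of
`suc^NS(J, g M, ρ')`: indeed `ρ' ⊗ I - Λ / g = ((g ρ' - ρ) ⊗ I + (ρ ⊗ I - Λ)) / g ≽ 0`, and
`Tr_R (Λ / g) = I / (g M)`. Hence `Tr[Λ J] = g Tr[(Λ / g) J] ≤ g suc^NS(J, g M, ρ')`.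
Since `J ≽ 0`, every objective value lies in `[0, Tr[(ρ' ⊗ I) J]]`, so the suprema are of bounded
sets and nonnegative; the latter covers an empty feasible set, where `sSup ∅ = 0`. -/

open Matrix Kronecker Filter ComplexOrder

namespace QCoding

/-- Partial trace over the first tensor factor. -/
noncomputable def trFst {R B : Type*} [Fintype R]
    (Λ : Matrix (R × B) (R × B) ℂ) : Matrix B B ℂ :=
  fun b b' => ∑ r, Λ (r, b) (r, b')

/-- Partial trace over the second tensor factor. -/
noncomputable def trSnd {R B : Type*} [Fintype B]
    (Λ : Matrix (R × B) (R × B) ℂ) : Matrix R R ℂ :=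
  fun r r' => ∑ b, Λ (r, b) (r', b)

/-- A quantum state: positive semidefinite with unit trace. -/
def IsState {n : Type*} [Fintype n] (ρ : Matrix n n ℂ) : Prop :=
  ρ.PosSemidef ∧ ρ.trace = 1

/-- A Choi matrix of a quantum channel: positive semidefinite with
partial trace over the output system equal to the identity. -/
def IsChoi {A B : Type*} [Fintype A] [Fintype B] [DecidableEq A]
    (J : Matrix (A × B) (A × B) ℂ) : Prop :=
  J.PosSemidef ∧ trSnd J = 1

/-- The non-signaling success probability: supremum of `(1/M) Tr[Λ J]` over states `ρ`
and `Λ` with `0 ≼ Λ ≼ M (ρ ⊗ I_B)` and `Tr_R Λ = I_B`. -/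
noncomputable def sucNS {A B : Type*} [Fintype A] [Fintype B] [DecidableEq B]
    (J : Matrix (A × B) (A × B) ℂ) (M : ℝ) : ℝ :=
  sSup {x | ∃ ρ : Matrix A A ℂ, ∃ Λ : Matrix (A × B) (A × B) ℂ,
    IsState ρ ∧ Λ.PosSemidef ∧
    ((M : ℂ) • (ρ ⊗ₖ (1 : Matrix B B ℂ)) - Λ).PosSemidef ∧
    trFst Λ = 1 ∧ x = (1 / M) * (Λ * J).trace.re}

/-- The meta-converse success probability: as `sucNS` but with `Tr_R Λ ≼ I_B`. -/
noncomputable def sucMC {A B : Type*} [Fintype A] [Fintype B] [DecidableEq B]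
    (J : Matrix (A × B) (A × B) ℂ) (M : ℝ) : ℝ :=
  sSup {x | ∃ ρ : Matrix A A ℂ, ∃ Λ : Matrix (A × B) (A × B) ℂ,
    IsState ρ ∧ Λ.PosSemidef ∧
    ((M : ℂ) • (ρ ⊗ₖ (1 : Matrix B B ℂ)) - Λ).PosSemidef ∧
    ((1 : Matrix B B ℂ) - trFst Λ).PosSemidef ∧
    x = (1 / M) * (Λ * J).trace.re}

/-- The fixed-input non-signaling success probability: supremum of `Tr[Λ J]` over `Λ`
with `0 ≼ Λ ≼ ρ ⊗ I_B` and `Tr_R Λ = (1/M) I_B`. -/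
noncomputable def sucNSFixed {A B : Type*} [Fintype A] [Fintype B] [DecidableEq B]
    (J : Matrix (A × B) (A × B) ℂ) (M : ℝ) (ρ : Matrix A A ℂ) : ℝ :=
  sSup {x | ∃ Λ : Matrix (A × B) (A × B) ℂ, Λ.PosSemidef ∧
    ((ρ ⊗ₖ (1 : Matrix B B ℂ)) - Λ).PosSemidef ∧
    trFst Λ = ((1 / M : ℂ)) • (1 : Matrix B B ℂ) ∧
    x = (Λ * J).trace.re}

/-- Apply a real function spectrally to a Hermitian matrix (junk value `0` otherwise). -/
noncomputable def hermApply {n : Type*} [Fintype n] [DecidableEq n]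
    (H : Matrix n n ℂ) (f : ℝ → ℝ) : Matrix n n ℂ :=
  if h : H.IsHermitian then
    (h.eigenvectorUnitary : Matrix n n ℂ) *
      Matrix.diagonal (fun i => (f (h.eigenvalues i) : ℂ)) *
      (star (h.eigenvectorUnitary : Matrix n n ℂ))
  else 0

/-- Real (spectral) power of a positive semidefinite matrix, with the Moore-Penrose
convention: for `p ≠ 0` the eigenvalue `0` is mapped to `(0:ℝ) ^ p = 0`.
In particular `matRPow ρ (1/2)` is the positive semidefinite square root of `ρ` and
`matRPow ρ (-(1/2))` is the Moore-Penrose pseudo-inverse of that square root. -/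
noncomputable def matRPow {n : Type*} [Fintype n] [DecidableEq n]
    (H : Matrix n n ℂ) (p : ℝ) : Matrix n n ℂ :=
  hermApply H (fun x => x ^ p)

/-- Positive part of a Hermitian matrix: each eigenvalue `λ` is replaced by `max λ 0`. -/
noncomputable def posPart {n : Type*} [Fintype n] [DecidableEq n]
    (H : Matrix n n ℂ) : Matrix n n ℂ :=
  hermApply H (fun x => max x 0)

/-- Support inclusion for positive semidefinite matrices: the kernel of `σ` is
contained in the kernel of `ρ`, i.e. the support of `ρ` is contained in that of `σ`. -/
def SuppLe {n : Type*} [Fintype n] (ρ σ : Matrix n n ℂ) : Prop :=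
  ∀ v : n → ℂ, σ.mulVec v = 0 → ρ.mulVec v = 0

/-- The sandwiched Rényi divergence of order `α` (finite-value formula, meaningful when
the support of `ρ` is contained in that of `σ`). -/
noncomputable def sandDiv {n : Type*} [Fintype n] [DecidableEq n]
    (α : ℝ) (ρ σ : Matrix n n ℂ) : ℝ :=
  (α - 1)⁻¹ * Real.log
    ((matRPow (matRPow σ ((1 - α) / (2 * α)) * ρ * matRPow σ ((1 - α) / (2 * α))) α).trace.re)

/-- The channel's sandwiched Rényi mutual information of order `α`:
`sup_ρ inf_σ D̃_α((ρ^{1/2} ⊗ I_B) J (ρ^{1/2} ⊗ I_B) ‖ ρ ⊗ σ)`, the infimum being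
restricted to those `σ` for which the support condition holds (the divergence is `+∞`
otherwise, so such `σ` never contribute to the infimum). -/
noncomputable def sandMI {A B : Type*} [Fintype A] [Fintype B] [DecidableEq A] [DecidableEq B]
    (α : ℝ) (J : Matrix (A × B) (A × B) ℂ) : ℝ :=
  sSup {x | ∃ ρ : Matrix A A ℂ, IsState ρ ∧
    x = sInf {y | ∃ σ : Matrix B B ℂ, IsState σ ∧
      SuppLe ((matRPow ρ (1/2) ⊗ₖ (1 : Matrix B B ℂ)) * J *
          (matRPow ρ (1/2) ⊗ₖ (1 : Matrix B B ℂ))) (ρ ⊗ₖ σ) ∧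
      y = sandDiv α ((matRPow ρ (1/2) ⊗ₖ (1 : Matrix B B ℂ)) * J *
          (matRPow ρ (1/2) ⊗ₖ (1 : Matrix B B ℂ))) (ρ ⊗ₖ σ)}}

/-- Choi matrix of the `n`-fold tensor power channel. -/
noncomputable def choiPow {A B : Type*} (J : Matrix (A × B) (A × B) ℂ) (n : ℕ) :
    Matrix ((Fin n → A) × (Fin n → B)) ((Fin n → A) × (Fin n → B)) ℂ :=
  fun p q => ∏ k : Fin n, J (p.1 k, p.2 k) (q.1 k, q.2 k)

/-- Action of the channel with Choi matrix `C` (from `S` to `T`) on the first tensor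
factor of a bipartite matrix on `S × E`. -/
noncomputable def chanApply {S T E : Type*} [Fintype S]
    (C : Matrix (S × T) (S × T) ℂ) (X : Matrix (S × E) (S × E) ℂ) :
    Matrix (T × E) (T × E) ℂ :=
  fun p q => ∑ s : S, ∑ s' : S, C (s, p.1) (s', q.1) * X (s, p.2) (s', q.2)

/-- The entanglement-assisted success probability for `M` messages: supremum over a
shared pure entangled state `ψ` on `Fin d × Fin d`, encoding channels `K m` from `E_A`
to `A` (Choi matrices), and a POVM `Ξ` on `B × E_B`, of the average probability of
correct decoding. -/
noncomputable def sucEA {A B : Type*} [Fintype A] [Fintype B] [DecidableEq B]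
    (J : Matrix (A × B) (A × B) ℂ) (M : ℕ) : ℝ :=
  sSup {x | ∃ d : ℕ, 1 ≤ d ∧
    ∃ ψ : Fin d × Fin d → ℂ, (∑ i, Complex.normSq (ψ i)) = 1 ∧
    ∃ K : Fin M → Matrix (Fin d × A) (Fin d × A) ℂ,
      (∀ m, (K m).PosSemidef ∧ trSnd (K m) = 1) ∧
    ∃ Ξ : Fin M → Matrix (B × Fin d) (B × Fin d) ℂ,
      (∀ m, (Ξ m).PosSemidef) ∧ (∑ m, Ξ m) = 1 ∧
      x = (1 / (M : ℝ)) *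
        ∑ m, ((Ξ m) * chanApply J (chanApply (K m) (Matrix.vecMulVec ψ (star ψ)))).trace.re}

theorem _root_.Matrix.PosSemidef.trace_mul_nonneg {n 𝕜 : Type*} [Fintype n] [RCLike 𝕜]
    {X Y : Matrix n n 𝕜} (hX : X.PosSemidef) (hY : Y.PosSemidef) : 0 ≤ (X * Y).trace := by
  classical
  open scoped MatrixOrder in
  obtain ⟨L, rfl⟩ := CStarAlgebra.nonneg_iff_eq_star_mul_self.mp hX.nonneg
  rw [star_eq_conjTranspose, Matrix.mul_assoc, trace_mul_comm]
  exact (hY.mul_mul_conjTranspose_same L).trace_nonneg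

theorem _root_.Matrix.PosSemidef.trace_mul_le_trace_mul {n 𝕜 : Type*} [Fintype n] [RCLike 𝕜]
    {X X' Y : Matrix n n 𝕜} (hX : (X' - X).PosSemidef) (hY : Y.PosSemidef) :
    (X * Y).trace ≤ (X' * Y).trace := by
  simpa [Matrix.sub_mul, trace_sub] using hX.trace_mul_nonneg hY

theorem trFst_smul {R B : Type*} [Fintype R] (c : ℂ) (Λ : Matrix (R × B) (R × B) ℂ) :
    trFst (c • Λ) = c • trFst Λ := by
  ext b b'
  simp [trFst, Finset.mul_sum]

section sucNSFixed

variable {A B : Type*} [Fintype A] [Fintype B] [DecidableEq B]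

def NSFixedFeasible (M : ℝ) (ρ : Matrix A A ℂ) (Λ : Matrix (A × B) (A × B) ℂ) : Prop :=
  Λ.PosSemidef ∧ (ρ ⊗ₖ (1 : Matrix B B ℂ) - Λ).PosSemidef ∧
    trFst Λ = (1 / M : ℂ) • (1 : Matrix B B ℂ)

theorem le_sucNSFixed {J : Matrix (A × B) (A × B) ℂ} (hJ : J.PosSemidef) {M : ℝ}
    {ρ : Matrix A A ℂ} {Λ : Matrix (A × B) (A × B) ℂ} (hΛ : NSFixedFeasible M ρ Λ) :
    (Λ * J).trace.re ≤ sucNSFixed J M ρ := by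
  refine le_csSup ⟨(ρ ⊗ₖ (1 : Matrix B B ℂ) * J).trace.re, ?_⟩ ⟨Λ, hΛ.1, hΛ.2.1, hΛ.2.2, rfl⟩
  rintro _ ⟨Λ', -, hΛ'ρ, -, rfl⟩
  exact Complex.re_le_re (hΛ'ρ.trace_mul_le_trace_mul hJ)

theorem sucNSFixed_le {J : Matrix (A × B) (A × B) ℂ} {M : ℝ} {ρ : Matrix A A ℂ} {c : ℝ}
    (hc : 0 ≤ c) (h : ∀ Λ, NSFixedFeasible M ρ Λ → (Λ * J).trace.re ≤ c) :
    sucNSFixed J M ρ ≤ c :=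
  Real.sSup_le (fun _ ⟨Λ, hΛ, hΛρ, htr, hx⟩ => hx ▸ h Λ ⟨hΛ, hΛρ, htr⟩) hc

theorem sucNSFixed_nonneg {J : Matrix (A × B) (A × B) ℂ} (hJ : J.PosSemidef) (M : ℝ)
    (ρ : Matrix A A ℂ) : 0 ≤ sucNSFixed J M ρ :=
  Real.sSup_nonneg fun _ ⟨_, hΛ, _, _, hx⟩ =>
    hx ▸ (Complex.nonneg_iff.mp (hΛ.trace_mul_nonneg hJ)).1

theorem NSFixedFeasible.inv_smul {M g : ℝ} (hg : 0 < g) {ρ ρ' : Matrix A A ℂ}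
    (hρρ' : ((g : ℂ) • ρ' - ρ).PosSemidef) {Λ : Matrix (A × B) (A × B) ℂ}
    (hΛ : NSFixedFeasible M ρ Λ) : NSFixedFeasible (g * M) ρ' ((g : ℂ)⁻¹ • Λ) := by
  obtain ⟨hΛ, hΛρ, htr⟩ := hΛ
  have hg' : (0 : ℂ) ≤ (g : ℂ)⁻¹ := by
    rw [← Complex.ofReal_inv]; exact Complex.zero_le_real.mpr (inv_nonneg.mpr hg.le)
  have hsplit : ρ' ⊗ₖ (1 : Matrix B B ℂ) - (g : ℂ)⁻¹ • Λ =
      (g : ℂ)⁻¹ • (((g : ℂ) • ρ' - ρ) ⊗ₖ (1 : Matrix B B ℂ) + (ρ ⊗ₖ 1 - Λ)) := by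
    have hg0 : (g : ℂ) ≠ 0 := Complex.ofReal_ne_zero.mpr hg.ne'
    rw [add_sub_assoc', ← add_kronecker, sub_add_cancel, smul_kronecker, smul_sub, smul_smul,
      inv_mul_cancel₀ hg0, one_smul]
  refine ⟨hΛ.smul hg', hsplit ▸ ((hρρ'.kronecker PosSemidef.one).add hΛρ).smul hg', ?_⟩
  rw [trFst_smul, htr, smul_smul]
  push_cast
  rw [one_div, one_div, mul_inv]

end sucNSFixed

theorem sucNSFixed_flatten_general {A B : Type*} [Fintype A] [DecidableEq A]
    [Fintype B] [DecidableEq B]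
    (J : Matrix (A × B) (A × B) ℂ) (hJ : IsChoi J)
    (M g : ℝ) (hg : 1 ≤ g)
    (ρ ρ' : Matrix A A ℂ)
    (hle : ((g : ℂ) • ρ' - ρ).PosSemidef) :
    sucNSFixed J M ρ ≤ g * sucNSFixed J (g * M) ρ' := by
  have hg0 : 0 < g := zero_lt_one.trans_le hg
  refine sucNSFixed_le (mul_nonneg hg0.le (sucNSFixed_nonneg hJ.1 _ _)) fun Λ hΛ => ?_
  have h := le_sucNSFixed hJ.1 (hΛ.inv_smul hg0 hle)
  rw [Matrix.smul_mul, trace_smul, smul_eq_mul, ← Complex.ofReal_inv, Complex.re_ofReal_mul] at h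
  exact (inv_mul_le_iff₀ hg0).mp h

/-- Flattening of the input state of the fixed-input non-signaling
program: if `ρ ≼ g·ρ'` then `suc^NS(J, M, ρ) ≤ g · suc^NS(J, g·M, ρ')`. -/
theorem sucNSFixed_flatten {A B : Type*} [Fintype A] [DecidableEq A] [Nonempty A]
    [Fintype B] [DecidableEq B]
    (J : Matrix (A × B) (A × B) ℂ) (hJ : IsChoi J)
    (M g : ℝ) (hM : 1 ≤ M) (hg : 1 ≤ g)
    (ρ ρ' : Matrix A A ℂ) (hρ : IsState ρ) (hρ' : IsState ρ')
    (hle : ((g : ℂ) • ρ' - ρ).PosSemidef) :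
    sucNSFixed J M ρ ≤ g * sucNSFixed J (g * M) ρ' :=
  sucNSFixed_flatten_general J hJ M g hg ρ ρ' hle

end QCoding
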